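/- Let H be a Hopf algebra over a field k with invertible antipode, H* its restricted dual, and define the pairing (h, x) := ⟨γ⁻¹(h), x⟩ for h ∈ H*, x ∈ H, where ⟨·,·⟩ is the canonical Hopf pairing. Then this pairing is invariant under the simultaneous H-actions: for all u ∈ H, (u ▷ h, x) paired suitably satisfies (u⁽¹⁾ ▷ h, u⁽²⁾ ▷_{ad} x) = ε(u)(h, x), where ▷ is the action x ▷ λ = x⁽²⁾ ⇀ λ ↼ γ(x⁽¹⁾) on H* and ▷_{ad} is the adjoint action u ▷_{ad} x = u⁽¹⁾ x γ(u⁽²⁾) on H. -/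

import Mathlib

/-!
The dual action is the transpose of the right adjoint action `y ◁ u = γ(u₁) y u₂`, and
`γ⁻¹(u ▷_ad x) = u₂ γ⁻¹(x) γ⁻¹(u₁)` because `γ⁻¹` is an anti-homomorphism. After moving `γ⁻¹`
across the pairing the claim becomes the identity `∑ γ(u₁) γ⁻¹(u₃ ▷_ad x) u₂ = ε(u) γ⁻¹(x)`
in `H`. By coassociativity its left side is `∑ γ(u₁) (∑ γ⁻¹(w₂ ▷_ad x) w₁)` with `w = u₂`, and the
inner sum is `w γ⁻¹(x)`, since `∑ γ⁻¹(w₂) w₁ = ε(w)` (`γ⁻¹` is an antipode of the co-opposite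
coalgebra). What remains is `∑ γ(u₁) u₂ γ⁻¹(x) = ε(u) γ⁻¹(x)`.
-/

open TensorProduct LinearMap

noncomputable section

variable (k : Type*) [Field k]
variable (H : Type*) [Ring H] [HopfAlgebra k H]
variable (K : Type*) [Ring K] [HopfAlgebra k K]

/-- The left adjoint action of `H` on itself. -/
def adjAction : H ⊗[k] H →ₗ[k] H :=
  (LinearMap.mul' k H) ∘ₗ
    (LinearMap.lTensor H ((LinearMap.mul' k H) ∘ₗ
      (LinearMap.lTensor H (HopfAlgebra.antipode (R := k))))) ∘ₗ
    (LinearMap.lTensor H (TensorProduct.comm k H H).toLinearMap) ∘ₗ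
    (TensorProduct.assoc k H H H).toLinearMap ∘ₗ
    (LinearMap.rTensor H (Coalgebra.comul (R := k)))

variable {H K}

/-- The action `x ▷ λ = x⁽²⁾ ⇀ λ ↼ γ(x⁽¹⁾)` of `H` on `K = H*`, built from the
coregular actions `actL (x ⊗ λ) = x ⇀ λ` and `actR (x ⊗ λ) = λ ↼ x`. -/
def actOnDual (actL actR : H ⊗[k] K →ₗ[k] K) : H ⊗[k] K →ₗ[k] K :=
  actL ∘ₗ (LinearMap.lTensor H actR) ∘ₗ
    (LinearMap.lTensor H (LinearMap.rTensor K (HopfAlgebra.antipode (R := k)))) ∘ₗ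
    (TensorProduct.assoc k H H K).toLinearMap ∘ₗ
    (LinearMap.rTensor K (TensorProduct.comm k H H).toLinearMap) ∘ₗ
    (LinearMap.rTensor K (Coalgebra.comul (R := k)))


namespace Coalgebra

variable {R A M : Type*} [CommSemiring R] [AddCommMonoid A] [Module R A] [Coalgebra R A]
  [AddCommMonoid M] [Module R M] {ι : Type*} {κ Λ : ι → Type*} {a : A}

lemma sum_apply_tmul_tmul_eq (Φ : A ⊗[R] (A ⊗[R] A) →ₗ[R] M) (r : Repr R a ι)
    (r₁ : ∀ i, Repr R (r.left i) (κ i)) (r₂ : ∀ i, Repr R (r.right i) (Λ i)) :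
    ∑ i ∈ r.index, ∑ j ∈ (r₁ i).index, Φ ((r₁ i).left j ⊗ₜ ((r₁ i).right j ⊗ₜ r.right i))
      = ∑ i ∈ r.index, ∑ j ∈ (r₂ i).index, Φ (r.left i ⊗ₜ ((r₂ i).left j ⊗ₜ (r₂ i).right j)) := by
  simpa only [map_sum] using congrArg Φ (sum_tmul_tmul_eq r r₁ r₂)

end Coalgebra

namespace HopfAlgebra

open Coalgebra

variable {R A : Type*} [CommSemiring R] [Semiring A] [HopfAlgebra R A] {g : A →ₗ[R] A}

lemma antipode_inverse_mul_antidistrib (hl : Function.LeftInverse g (antipode R))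
    (hr : Function.RightInverse g (antipode R)) (x y : A) : g (x * y) = g y * g x :=
  hl.injective (by rw [hr, antipode_mul_antidistrib, hr, hr])

lemma sum_antipode_inverse_mul_eq_smul (hl : Function.LeftInverse g (antipode R))
    (hr : Function.RightInverse g (antipode R)) {ι : Type*} {a : A} (r : Repr R a ι) :
    ∑ i ∈ r.index, g (r.right i) * r.left i = counit (R := R) a • 1 := by
  apply hl.injective
  simp only [map_sum, antipode_mul_antidistrib, hr _, map_smul, antipode_one]
  exact sum_antipode_mul_eq_smul r

lemma pair_antipode_inverse_eq {R A B M : Type*} [CommSemiring R] [Semiring A] [HopfAlgebra R A]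
    [Semiring B] [HopfAlgebra R B] [AddCommMonoid M] [Module R M] {pair : B →ₗ[R] A →ₗ[R] M}
    (pair_antipode : ∀ (lam : B) (x : A), pair (antipode R lam) x = pair lam (antipode R x))
    {gA : A →ₗ[R] A} {gB : B →ₗ[R] B} (hA : Function.RightInverse gA (antipode R))
    (hB : Function.RightInverse gB (antipode R)) (lam : B) (x : A) :
    pair (gB lam) x = pair lam (gA x) := by
  simpa only [hA _, hB _] using (pair_antipode (gB lam) (gA x)).symm

end HopfAlgebra

section

open Coalgebra HopfAlgebra

variable {k} {ι : Type*}

lemma adjAction_tmul {w : H} (r : Repr k w ι) (x : H) :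
    adjAction k H (w ⊗ₜ x) = ∑ i ∈ r.index, r.left i * x * antipode k (r.right i) := by
  simp [adjAction, ← r.eq, sum_tmul, mul_assoc]

lemma antipode_inverse_adjAction_tmul {g : H →ₗ[k] H} (hl : Function.LeftInverse g (antipode k))
    (hr : Function.RightInverse g (antipode k)) {w : H} (r : Repr k w ι) (x : H) :
    g (adjAction k H (w ⊗ₜ x)) = ∑ i ∈ r.index, r.right i * g x * g (r.left i) := by
  simp only [adjAction_tmul r, map_sum, antipode_inverse_mul_antidistrib hl hr, hl _, mul_assoc]

lemma pair_actOnDual_tmul {pair : K →ₗ[k] H →ₗ[k] k} {actL actR : H ⊗[k] K →ₗ[k] K}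
    (hactL : ∀ (x y : H) (lam : K), pair (actL (x ⊗ₜ[k] lam)) y = pair lam (y * x))
    (hactR : ∀ (x y : H) (lam : K), pair (actR (x ⊗ₜ[k] lam)) y = pair lam (x * y))
    {w : H} (r : Repr k w ι) (lam : K) (y : H) :
    pair (actOnDual k actL actR (w ⊗ₜ lam)) y
      = ∑ i ∈ r.index, pair lam (antipode k (r.left i) * y * r.right i) := by
  simp [actOnDual, ← r.eq, sum_tmul, hactL, hactR, mul_assoc]

lemma sum_antipode_inverse_adjAction_mul {g : H →ₗ[k] H}
    (hl : Function.LeftInverse g (antipode k)) (hr : Function.RightInverse g (antipode k))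
    {w : H} (r : Repr k w ι) (x : H) :
    ∑ i ∈ r.index, g (adjAction k H (r.right i ⊗ₜ x)) * r.left i = w * g x := by
  set r₁ := fun i => ℛ k (r.left i)
  set r₂ := fun i => ℛ k (r.right i)
  -- coassociativity read through `p ⊗ (q ⊗ s) ↦ s γ⁻¹(x) γ⁻¹(q) p`
  have coassoc := sum_apply_tmul_tmul_eq (mul' k H ∘ₗ (TensorProduct.comm k H H).toLinearMap ∘ₗ
    lTensor H (mul' k H ∘ₗ (TensorProduct.comm k H H).toLinearMap ∘ₗ map g (mulRight k (g x))))
    r r₁ r₂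
  simp only [coe_comp, Function.comp_apply, LinearEquiv.coe_coe, lTensor_tmul, map_tmul,
    comm_tmul, mul'_apply, mulRight_apply] at coassoc
  calc ∑ i ∈ r.index, g (adjAction k H (r.right i ⊗ₜ x)) * r.left i
      = ∑ i ∈ r.index, ∑ j ∈ (r₂ i).index, (r₂ i).right j * g x * g ((r₂ i).left j) * r.left i := by
        simp only [antipode_inverse_adjAction_tmul hl hr (r₂ _), Finset.sum_mul]
    _ = ∑ i ∈ r.index, ∑ j ∈ (r₁ i).index,
          r.right i * g x * (g ((r₁ i).right j) * (r₁ i).left j) := by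
        simpa only [mul_assoc] using coassoc.symm
    _ = ∑ i ∈ r.index, counit (R := k) (r.left i) • r.right i * g x := by
        simp only [← Finset.mul_sum, sum_antipode_inverse_mul_eq_smul hl hr, mul_smul_one,
          smul_mul_assoc]
    _ = w * g x := by rw [← Finset.sum_mul, sum_counit_smul]

lemma sum_antipode_mul_antipode_inverse_adjAction_mul {g : H →ₗ[k] H}
    (hl : Function.LeftInverse g (antipode k)) (hr : Function.RightInverse g (antipode k))
    {κ : ι → Type*} {u : H} (r : Repr k u ι) (r₁ : ∀ i, Repr k (r.left i) (κ i)) (x : H) :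
    ∑ i ∈ r.index, ∑ j ∈ (r₁ i).index,
      antipode k ((r₁ i).left j) * g (adjAction k H (r.right i ⊗ₜ x)) * (r₁ i).right j
      = counit (R := k) u • g x := by
  set r₂ := fun i => ℛ k (r.right i)
  -- coassociativity read through `p ⊗ (q ⊗ s) ↦ γ(p) γ⁻¹(s ▷_ad x) q`
  have coassoc := sum_apply_tmul_tmul_eq (mul' k H ∘ₗ map (antipode k) (mul' k H ∘ₗ
    (TensorProduct.comm k H H).toLinearMap ∘ₗ
    lTensor H (g ∘ₗ adjAction k H ∘ₗ (TensorProduct.mk k H H).flip x))) r r₁ r₂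
  simp only [coe_comp, Function.comp_apply, LinearEquiv.coe_coe, lTensor_tmul, map_tmul,
    comm_tmul, mul'_apply, flip_apply, mk_apply] at coassoc
  calc _ = ∑ i ∈ r.index, antipode k (r.left i) *
          ∑ j ∈ (r₂ i).index, g (adjAction k H ((r₂ i).right j ⊗ₜ x)) * (r₂ i).left j := by
        simpa only [mul_assoc, Finset.mul_sum] using coassoc
    _ = ∑ i ∈ r.index, antipode k (r.left i) * r.right i * g x := by
        simp only [sum_antipode_inverse_adjAction_mul hl hr, mul_assoc]
    _ = counit (R := k) u • g x := by
        rw [← Finset.sum_mul, sum_antipode_mul_eq_smul, smul_one_mul]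

end

theorem statement19
    -- the canonical Hopf pairing between `K = H*` and `H`:
    (pair : K →ₗ[k] H →ₗ[k] k)
    (pair_antipode : ∀ (lam : K) (x : H),
      pair (HopfAlgebra.antipode (R := k) lam) x = pair lam (HopfAlgebra.antipode (R := k) x))
    -- the antipodes are invertible:
    (γHinv : H →ₗ[k] H)
    (hγH : (HopfAlgebra.antipode (R := k) (A := H)) ∘ₗ γHinv = LinearMap.id ∧
      γHinv ∘ₗ (HopfAlgebra.antipode (R := k) (A := H)) = LinearMap.id)
    (γKinv : K →ₗ[k] K)
    (hγK : (HopfAlgebra.antipode (R := k) (A := K)) ∘ₗ γKinv = LinearMap.id ∧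
      γKinv ∘ₗ (HopfAlgebra.antipode (R := k) (A := K)) = LinearMap.id)
    -- the coregular actions `⟨x ⇀ λ, y⟩ = ⟨λ, yx⟩` and `⟨λ ↼ x, y⟩ = ⟨λ, xy⟩`:
    (actL actR : H ⊗[k] K →ₗ[k] K)
    (hactL : ∀ (x y : H) (lam : K), pair (actL (x ⊗ₜ[k] lam)) y = pair lam (y * x))
    (hactR : ∀ (x y : H) (lam : K), pair (actR (x ⊗ₜ[k] lam)) y = pair lam (x * y)) :
    -- invariance of `(h, x) = ⟨γ⁻¹(h), x⟩` under the diagonal action: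
    (TensorProduct.lift (pair ∘ₗ γKinv)) ∘ₗ
        (TensorProduct.map (actOnDual k actL actR) (adjAction k H)) ∘ₗ
        (TensorProduct.tensorTensorTensorComm k H H K H).toLinearMap ∘ₗ
        (LinearMap.rTensor (K ⊗[k] H) (Coalgebra.comul (R := k)))
      = (TensorProduct.lift (pair ∘ₗ γKinv)) ∘ₗ
          (TensorProduct.lid k (K ⊗[k] H)).toLinearMap ∘ₗ
          (LinearMap.rTensor (K ⊗[k] H) (Coalgebra.counit (R := k))) := by
  have hlH : Function.LeftInverse γHinv (HopfAlgebra.antipode k) := LinearMap.congr_fun hγH.2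
  have hrH : Function.RightInverse γHinv (HopfAlgebra.antipode k) := LinearMap.congr_fun hγH.1
  have hrK : Function.RightInverse γKinv (HopfAlgebra.antipode k) := LinearMap.congr_fun hγK.1
  refine TensorProduct.ext_threefold' fun u h x => ?_
  let r := Coalgebra.Repr.arbitrary k u
  let r₁ := fun i => Coalgebra.Repr.arbitrary k (r.left i)
  calc _ = ∑ i ∈ r.index, pair (γKinv (actOnDual k actL actR (r.left i ⊗ₜ h)))
          (adjAction k H (r.right i ⊗ₜ x)) := by
        simp only [coe_comp, LinearEquiv.coe_coe, Function.comp_apply, rTensor_tmul, ← r.eq,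
          sum_tmul, map_sum, tensorTensorTensorComm_tmul, map_tmul, lift.tmul]
    _ = pair h (∑ i ∈ r.index, ∑ j ∈ (r₁ i).index, HopfAlgebra.antipode k ((r₁ i).left j) *
          γHinv (adjAction k H (r.right i ⊗ₜ x)) * (r₁ i).right j) := by
        simp only [HopfAlgebra.pair_antipode_inverse_eq pair_antipode hrH hrK,
          pair_actOnDual_tmul hactL hactR (r₁ _), map_sum]
    _ = pair h (Coalgebra.counit (R := k) u • γHinv x) := by
        rw [sum_antipode_mul_antipode_inverse_adjAction_mul hlH hrH]
    _ = _ := by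
        simp [HopfAlgebra.pair_antipode_inverse_eq pair_antipode hrH hrK]

end
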